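/- arXiv:0903.4499 — 4 statements merged into one kernel-verified Lean document; each statement's English description precedes it below -/
import Mathlib

section
/- Let μ be a complex measure on ℝ of finite total variation and let a > 0. If the Fourier transform x ↦ ∫ e^{ixt} dμ(t) vanishes for all x ∈ [-a, a], then for every x ∈ [-a, a], e^{xy} ∫ dμ(t)/(t - iy) → 0 as y → +∞ and as y → -∞. -/
/-!
For fixed `y ≠ 0` the function `F(x) = ∫ e^{ix(t - iy)} / (t - iy) dμ(t)` has derivative
`i e^{xy} μ̂(x)`, so it is constant on `[-a, a]`, where it equals its value `F(0)`, the Cauchy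
transform at `iy`. Since `|F(x)| ≤ e^{xy} ‖μ‖ / |y|`, comparing with `F(-a)` for `y > 0` and with
`F(a)` for `y < 0` gives `|e^{xy} F(0)| ≤ e^{(x ∓ a) y} ‖μ‖ / |y| ≤ ‖μ‖ / |y|`.
-/

open MeasureTheory Filter Complex

lemma ofReal_sub_I_mul_ne_zero {y : ℝ} (hy : y ≠ 0) (t : ℝ) : (t : ℂ) - I * y ≠ 0 := fun h =>
  hy (by simpa using congrArg im h)

lemma abs_le_norm_ofReal_sub_I_mul (t y : ℝ) : |y| ≤ ‖(t : ℂ) - I * y‖ := by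
  simpa using abs_im_le_norm ((t : ℂ) - I * y)

lemma norm_exp_I_mul_ofReal_sub_I_mul (x t y : ℝ) :
    ‖exp (I * x * ((t : ℂ) - I * y))‖ = Real.exp (x * y) := by
  simp [norm_exp]

lemma norm_exp_I_mul_div_ofReal_sub_I_mul_le {y : ℝ} (hy : y ≠ 0) (x t : ℝ) :
    ‖exp (I * x * ((t : ℂ) - I * y)) / ((t : ℂ) - I * y)‖ ≤ Real.exp (x * y) / |y| := by
  rw [norm_div, norm_exp_I_mul_ofReal_sub_I_mul]
  exact div_le_div_of_nonneg_left (Real.exp_pos _).le (abs_pos.mpr hy)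
    (abs_le_norm_ofReal_sub_I_mul t y)

lemma hasDerivAt_exp_I_mul_div {w : ℂ} (hw : w ≠ 0) (x : ℝ) :
    HasDerivAt (fun x : ℝ => exp (I * x * w) / w) (I * exp (I * x * w)) x := by
  have := (((hasDerivAt_id (x : ℂ)).mul_const (I * w)).cexp.div_const w).comp_ofReal
  convert this using 1
  · ext x
    simp only [id]
    ring_nf
  · simp only [id]
    field_simp

section

variable {ν : Measure ℝ} {h : ℝ → ℂ}

noncomputable def expCauchyTransform (ν : Measure ℝ) (h : ℝ → ℂ) (y x : ℝ) : ℂ :=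
  ∫ t, exp (I * x * ((t : ℂ) - I * y)) / ((t : ℂ) - I * y) * h t ∂ν

lemma expCauchyTransform_zero (y : ℝ) :
    expCauchyTransform ν h y 0 = ∫ t, h t / ((t : ℂ) - I * y) ∂ν := by
  simp only [expCauchyTransform, ofReal_zero, mul_zero, zero_mul, exp_zero]
  congr 1 with t
  ring

lemma integrable_expCauchyTransform_integrand (hint : Integrable h ν) {y : ℝ} (hy : y ≠ 0)
    (x : ℝ) :
    Integrable (fun t : ℝ => exp (I * x * ((t : ℂ) - I * y)) / ((t : ℂ) - I * y) * h t) ν :=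
  hint.bdd_mul
    (Continuous.div (by fun_prop) (by fun_prop) (ofReal_sub_I_mul_ne_zero hy)).aestronglyMeasurable
    (ae_of_all _ (norm_exp_I_mul_div_ofReal_sub_I_mul_le hy x))

lemma norm_expCauchyTransform_le (hint : Integrable h ν) {y : ℝ} (hy : y ≠ 0) (x : ℝ) :
    ‖expCauchyTransform ν h y x‖ ≤ Real.exp (x * y) / |y| * ∫ t, ‖h t‖ ∂ν := by
  calc ‖expCauchyTransform ν h y x‖
      ≤ ∫ t, ‖exp (I * x * ((t : ℂ) - I * y)) / ((t : ℂ) - I * y) * h t‖ ∂ν :=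
        norm_integral_le_integral_norm _
    _ ≤ ∫ t, Real.exp (x * y) / |y| * ‖h t‖ ∂ν := by
        refine integral_mono_of_nonneg (ae_of_all _ fun _ => norm_nonneg _)
          (hint.norm.const_mul _) (ae_of_all _ fun t => ?_)
        dsimp only
        rw [norm_mul]
        gcongr
        exact norm_exp_I_mul_div_ofReal_sub_I_mul_le hy x t
    _ = Real.exp (x * y) / |y| * ∫ t, ‖h t‖ ∂ν := integral_const_mul _ _

lemma hasDerivAt_expCauchyTransform (hint : Integrable h ν) {y : ℝ} (hy : y ≠ 0) (x : ℝ) :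
    HasDerivAt (expCauchyTransform ν h y)
      (I * Real.exp (x * y) * ∫ t, exp (I * x * t) * h t ∂ν) x := by
  set w : ℝ → ℂ := fun t => (t : ℂ) - I * y
  have hbound : ∀ x' ∈ Metric.ball x 1, ∀ t, ‖I * exp (I * x' * w t) * h t‖
      ≤ Real.exp ((|x| + 1) * |y|) * ‖h t‖ := by
    intro x' hx' t
    rw [norm_mul, norm_mul, norm_I, one_mul, norm_exp_I_mul_ofReal_sub_I_mul]
    refine mul_le_mul_of_nonneg_right (Real.exp_le_exp.mpr ?_) (norm_nonneg _)
    have hx'_le : |x'| ≤ |x| + 1 := by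
      rw [Metric.mem_ball, Real.dist_eq] at hx'
      linarith [abs_sub_abs_le_abs_sub x' x]
    calc x' * y ≤ |x'| * |y| := (le_abs_self _).trans (abs_mul _ _).le
      _ ≤ (|x| + 1) * |y| := by gcongr
  have key := hasDerivAt_integral_of_dominated_loc_of_deriv_le (Metric.ball_mem_nhds x one_pos)
    (Eventually.of_forall fun x' =>
      (integrable_expCauchyTransform_integrand hint hy x').aestronglyMeasurable)
    (integrable_expCauchyTransform_integrand hint hy x)
    ((continuous_const.mul (Continuous.cexp (by fun_prop))).aestronglyMeasurable.mul
      hint.aestronglyMeasurable)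
    (ae_of_all _ fun t x' hx' => hbound x' hx' t) (hint.norm.const_mul _)
    (ae_of_all _ fun t x' _ =>
      (hasDerivAt_exp_I_mul_div (ofReal_sub_I_mul_ne_zero hy t) x').mul_const (h t))
  refine key.2.congr_deriv ?_
  rw [← integral_const_mul]
  congr 1 with t
  have hexponent : I * x * w t = x * y + I * x * t := by
    simp only [w]
    ring_nf
    rw [I_sq]
    ring
  rw [hexponent, exp_add, ← ofReal_mul, ← ofReal_exp]
  ring

lemma expCauchyTransform_eq_of_fourier_eq_zero (hint : Integrable h ν) {y : ℝ} (hy : y ≠ 0)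
    {a : ℝ} (hvanish : ∀ x ∈ Set.Icc (-a) a, ∫ t, exp (I * x * t) * h t ∂ν = 0)
    {x x' : ℝ} (hx : x ∈ Set.Icc (-a) a) (hx' : x' ∈ Set.Icc (-a) a) :
    expCauchyTransform ν h y x = expCauchyTransform ν h y x' := by
  have hconst := constant_of_has_deriv_right_zero (a := -a) (b := a)
    (fun x _ => (hasDerivAt_expCauchyTransform hint hy x).continuousAt.continuousWithinAt)
    fun x hx => by
      simpa [hvanish x (Set.Ico_subset_Icc_self hx)] using
        (hasDerivAt_expCauchyTransform hint hy x).hasDerivWithinAt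
  rw [hconst x hx, hconst x' hx']

lemma norm_exp_mul_cauchyTransform_le (hint : Integrable h ν) {a : ℝ}
    (hvanish : ∀ x ∈ Set.Icc (-a) a, ∫ t, exp (I * x * t) * h t ∂ν = 0)
    {x : ℝ} (hx : x ∈ Set.Icc (-a) a) {y : ℝ} (hy : y ≠ 0) :
    ‖(Real.exp (x * y) : ℂ) * ∫ t, h t / ((t : ℂ) - I * y) ∂ν‖ ≤ (∫ t, ‖h t‖ ∂ν) * ‖y‖⁻¹ := by
  obtain ⟨hxa, hxa'⟩ := hx
  have h0 : (0 : ℝ) ∈ Set.Icc (-a) a := ⟨by linarith, by linarith⟩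
  obtain ⟨b, hb, hby⟩ : ∃ b ∈ Set.Icc (-a) a, (x + b) * y ≤ 0 := by
    rcases hy.lt_or_gt with hneg | hpos
    · exact ⟨a, ⟨by linarith, le_rfl⟩, by nlinarith⟩
    · exact ⟨-a, ⟨le_rfl, by linarith⟩, by nlinarith⟩
  rw [← expCauchyTransform_zero, expCauchyTransform_eq_of_fourier_eq_zero hint hy hvanish h0 hb,
    norm_mul, norm_real, Real.norm_of_nonneg (Real.exp_pos _).le]
  calc Real.exp (x * y) * ‖expCauchyTransform ν h y b‖
      ≤ Real.exp (x * y) * (Real.exp (b * y) / |y| * ∫ t, ‖h t‖ ∂ν) := by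
        gcongr
        exact norm_expCauchyTransform_le hint hy b
    _ = Real.exp ((x + b) * y) * ((∫ t, ‖h t‖ ∂ν) * ‖y‖⁻¹) := by
        rw [add_mul, Real.exp_add, Real.norm_eq_abs]
        ring
    _ ≤ (∫ t, ‖h t‖ ∂ν) * ‖y‖⁻¹ :=
        mul_le_of_le_one_left (by positivity) (Real.exp_le_one_iff.mpr hby)

end

theorem stmt_0_general (ν : Measure ℝ) (h : ℝ → ℂ)
    (hint : Integrable h ν) (a : ℝ)
    (hvanish : ∀ x ∈ Set.Icc (-a) a, ∫ t, Complex.exp (Complex.I * x * t) * h t ∂ν = 0) :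
    ∀ x ∈ Set.Icc (-a) a,
      Tendsto (fun y : ℝ => (Real.exp (x * y) : ℂ) * ∫ t, h t / ((t : ℂ) - Complex.I * y) ∂ν)
        atTop (nhds 0) ∧
      Tendsto (fun y : ℝ => (Real.exp (x * y) : ℂ) * ∫ t, h t / ((t : ℂ) - Complex.I * y) ∂ν)
        atBot (nhds 0) := by
  intro x hx
  have hbound : Tendsto (fun y : ℝ => (∫ t, ‖h t‖ ∂ν) * ‖y‖⁻¹) (cocompact ℝ) (nhds 0) := by
    simpa using
      ((tendsto_norm_cocompact_atTop (E := ℝ)).inv_tendsto_atTop).const_mul (∫ t, ‖h t‖ ∂ν)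
  have hcocompact : Tendsto (fun y : ℝ => (Real.exp (x * y) : ℂ) *
      ∫ t, h t / ((t : ℂ) - Complex.I * y) ∂ν) (cocompact ℝ) (nhds 0) := by
    refine squeeze_zero_norm' ?_ hbound
    filter_upwards [(isCompact_singleton (x := (0 : ℝ))).compl_mem_cocompact] with y hy
    exact norm_exp_mul_cauchyTransform_le hint hvanish hx hy
  exact ⟨hcocompact.mono_left atTop_le_cocompact, hcocompact.mono_left atBot_le_cocompact⟩

/-- If the Fourier transform of a complex measure `h dν` (with `ν` a finite
positive measure and `h` integrable, representing a complex measure of finite total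
variation) vanishes on `[-a, a]`, then for every `x ∈ [-a, a]` the Cauchy transform
satisfies `e^{xy} ∫ dμ(t)/(t - iy) → 0` as `y → ±∞`. -/
theorem stmt_0 (ν : Measure ℝ) [IsFiniteMeasure ν] (h : ℝ → ℂ)
    (hint : Integrable h ν) (a : ℝ) (ha : 0 < a)
    (hvanish : ∀ x ∈ Set.Icc (-a) a, ∫ t, Complex.exp (Complex.I * x * t) * h t ∂ν = 0) :
    ∀ x ∈ Set.Icc (-a) a,
      Tendsto (fun y : ℝ => (Real.exp (x * y) : ℂ) * ∫ t, h t / ((t : ℂ) - Complex.I * y) ∂ν)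
        atTop (nhds 0) ∧
      Tendsto (fun y : ℝ => (Real.exp (x * y) : ℂ) * ∫ t, h t / ((t : ℂ) - Complex.I * y) ∂ν)
        atBot (nhds 0) :=
  stmt_0_general ν h hint a hvanish
end

section
/- The sequence Λ = {n²}_{n∈ℕ} is not a Pólya sequence: there exists a non-constant entire function of exponential type zero that is bounded on {n² : n ∈ ℕ}. -/
open Filter Complex

/-- An entire function has exponential type zero if `limsup_{|z|→∞} log|F(z)|/|z| = 0`. -/
def ExpTypeZero (F : ℂ → ℂ) : Prop :=
  Filter.limsup (fun z : ℂ => Real.log ‖F z‖ / ‖z‖)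
    (Filter.comap (fun z : ℂ => ‖z‖) Filter.atTop) = 0

/-!
The witness is `F z = cos (π √z)`. The even power series of `cos` makes `cos ∘ √` the entire
function `∑ (-1)ᵏ zᵏ / (2k)!`, so `F` is entire, and `F (n ^ 2) = cos (π n) = ±1`. Comparing with
the series of `cosh` gives `‖F z‖ ≤ exp (π √‖z‖)`, whence `log ‖F z‖ / ‖z‖ ≤ π / √‖z‖ → 0`;
the limsup is not below `0` because `‖F (-x)‖ = cosh (π √x) ≥ 1` on the negative real axis.
-/

open FormalMultilinearSeries Topology Bornology
open scoped Nat

theorem expTypeZero_of_norm_le_exp_sqrt {F : ℂ → ℂ} {C : ℝ}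
    (hF : ∀ z, ‖F z‖ ≤ Real.exp (C * √‖z‖))
    (hF_large : ∃ᶠ z in cobounded ℂ, 1 ≤ ‖F z‖) : ExpTypeZero F := by
  have hdecay : Tendsto (fun r => C / √r) atTop (𝓝 0) :=
    tendsto_const_nhds.div_atTop Real.tendsto_sqrt_atTop
  have hsmall : ∀ ε > 0, ∀ᶠ z in cobounded ℂ, Real.log ‖F z‖ / ‖z‖ ≤ ε := by
    intro ε hε
    filter_upwards [tendsto_norm_cobounded_atTop.eventually (eventually_gt_atTop 0),
      tendsto_norm_cobounded_atTop.eventually (hdecay.eventually (eventually_le_nhds hε))]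
      with z hz hCz
    -- at a zero of `F`, `Real.log 0 = 0`
    rcases (norm_nonneg (F z)).eq_or_lt with hFz | hFz
    · simp [← hFz, hε.le]
    calc Real.log ‖F z‖ / ‖z‖ ≤ C * √‖z‖ / ‖z‖ := by
          gcongr; exact (Real.log_le_iff_le_exp hFz).2 (hF z)
      _ = C / √‖z‖ := by rw [mul_div_assoc, Real.sqrt_div_self', mul_one_div]
      _ ≤ ε := hCz
  have hfreq : ∃ᶠ z in cobounded ℂ, 0 ≤ Real.log ‖F z‖ / ‖z‖ :=
    hF_large.mono fun z hz => div_nonneg (Real.log_nonneg hz) (norm_nonneg z)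
  rw [ExpTypeZero, comap_norm_atTop]
  refine le_antisymm (le_of_forall_pos_le_add fun ε hε => ?_) ?_
  · rw [zero_add]
    exact limsup_le_of_le (IsCoboundedUnder.of_frequently_ge hfreq) (hsmall ε hε)
  · exact le_limsup_of_frequently_le hfreq (isBoundedUnder_of_eventually_le (hsmall 1 one_pos))

noncomputable def cosSqrtCoeff (k : ℕ) : ℂ := (-1) ^ k / (2 * k)!

noncomputable def cosSqrt : ℂ → ℂ := ofScalarsSum cosSqrtCoeff

theorem hasSum_norm_cosSqrtCoeff_mul_pow {r : ℝ} (hr : 0 ≤ r) :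
    HasSum (fun k => ‖cosSqrtCoeff k‖ * r ^ k) (Real.cosh √r) := by
  refine (Real.hasSum_cosh √r).congr_fun fun k => ?_
  simp [cosSqrtCoeff, pow_mul, Real.sq_sqrt hr, div_eq_inv_mul]

theorem radius_ofScalars_cosSqrtCoeff : (ofScalars ℂ cosSqrtCoeff).radius = ⊤ :=
  radius_eq_top_of_summable_norm _ fun r =>
    (hasSum_norm_cosSqrtCoeff_mul_pow r.2).summable.congr fun k => by rw [ofScalars_norm]; rfl

theorem hasSum_cosSqrt (z : ℂ) : HasSum (fun k => cosSqrtCoeff k * z ^ k) (cosSqrt z) := by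
  have h := (ofScalars ℂ cosSqrtCoeff).hasSum (x := z) (by simp [radius_ofScalars_cosSqrtCoeff])
  simp only [ofScalars_apply_eq', smul_eq_mul] at h
  exact h

theorem differentiable_cosSqrt : Differentiable ℂ cosSqrt := fun z =>
  ((ofScalars ℂ cosSqrtCoeff).hasFPowerSeriesOnBall (by simp [radius_ofScalars_cosSqrtCoeff])
    |>.analyticAt_of_mem (by simp [radius_ofScalars_cosSqrtCoeff])).differentiableAt

theorem cosSqrt_sq (w : ℂ) : cosSqrt (w ^ 2) = cos w :=
  (hasSum_cosSqrt _).unique <| (hasSum_cos w).congr_fun fun k => by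
    rw [cosSqrtCoeff, pow_mul]; ring

theorem norm_cosSqrt_le (z : ℂ) : ‖cosSqrt z‖ ≤ Real.exp √‖z‖ := by
  have hnorm := hasSum_norm_cosSqrtCoeff_mul_pow (norm_nonneg z)
  calc ‖cosSqrt z‖ ≤ Real.cosh √‖z‖ := by
        refine (hasSum_cosSqrt z).norm_le_of_bounded hnorm fun k => ?_
        rw [norm_mul, norm_pow]
    _ ≤ Real.exp √‖z‖ := by
        rw [Real.cosh_eq]
        linarith [Real.exp_le_exp.2 (neg_le_self (Real.sqrt_nonneg ‖z‖))]

theorem one_le_norm_cosSqrt_ofReal {x : ℝ} (hx : x ≤ 0) : 1 ≤ ‖cosSqrt x‖ := by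
  have hsq : (x : ℂ) = (√(-x) * I) ^ 2 := by
    rw [mul_pow, I_sq, ← ofReal_pow, Real.sq_sqrt (neg_nonneg.2 hx)]; push_cast; ring
  rw [hsq, cosSqrt_sq, cos_mul_I, ← ofReal_cosh, norm_real, Real.norm_eq_abs,
    abs_of_pos (Real.cosh_pos _)]
  exact Real.one_le_cosh _

theorem expTypeZero_cosSqrt_sq_mul (c : ℝ) : ExpTypeZero fun z => cosSqrt (c ^ 2 * z) := by
  refine expTypeZero_of_norm_le_exp_sqrt (C := |c|) (fun z => ?_) ?_
  · calc ‖cosSqrt (c ^ 2 * z)‖ ≤ Real.exp √‖(c : ℂ) ^ 2 * z‖ := norm_cosSqrt_le _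
      _ = Real.exp (|c| * √‖z‖) := by
        rw [norm_mul, norm_pow, norm_real, Real.norm_eq_abs, Real.sqrt_mul (by positivity),
          Real.sqrt_sq (abs_nonneg c)]
  · refine (RCLike.tendsto_ofReal_atBot_cobounded ℂ).frequently
      ((eventually_le_atBot 0).mono fun x hx => ?_).frequently
    simpa using one_le_norm_cosSqrt_ofReal (mul_nonpos_of_nonneg_of_nonpos (sq_nonneg c) hx)

/-- The sequence `{n²}` is not a Pólya sequence: there is a non-constant
entire function of exponential type zero bounded on `{n² : n ∈ ℕ}`. -/
theorem stmt_4 :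
    ∃ F : ℂ → ℂ, Differentiable ℂ F ∧ ExpTypeZero F ∧
      ¬(∃ c : ℂ, ∀ z : ℂ, F z = c) ∧
      ∃ M : ℝ, ∀ n : ℕ, ‖F ((n : ℂ) ^ 2)‖ ≤ M := by
  set F : ℂ → ℂ := fun z => cosSqrt ((Real.pi : ℂ) ^ 2 * z)
  have hF_sq (w : ℂ) : F (w ^ 2) = cos (Real.pi * w) := by simp only [F, ← mul_pow, cosSqrt_sq]
  refine ⟨F, differentiable_cosSqrt.comp (differentiable_id.const_mul _),
    expTypeZero_cosSqrt_sq_mul Real.pi, ?_, 1, fun n => ?_⟩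
  · rintro ⟨c, hc⟩
    have h0 : F 0 = 1 := by simpa using hF_sq 0
    have h1 : F 1 = -1 := by simpa using hF_sq 1
    rw [hc] at h0 h1
    have : (1 : ℂ) = -1 := h0 ▸ h1
    norm_num at this
  · rw [hF_sq, ← ofReal_natCast, ← ofReal_mul, ← ofReal_cos, norm_real]
    exact Real.abs_cos_le_one _
end

section
/- Let μ be a nonzero complex measure on ℝ of finite total variation. If F is an entire function of exponential type zero satisfying ∫ (Fⁿ(t) - Fⁿ(z))/(t-z) dμ(t) = 0 for all z ∈ ℂ and all n ∈ ℕ, and |F| ≤ M on the support of μ, then |F(z)| ≤ M for every z with Im z ≠ 0 such that ∫ dμ(t)/(t-z) ≠ 0. -/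
/-!
Subtracting the two terms of the vanishing integral gives `F(z)ⁿ · Cμ(z) = C(Fⁿμ)(z)`, where
`C` is the Cauchy transform. Since `|t - z| ≥ |Im z|` on the real line and `|F| ≤ M` on the
support of `μ`, the right-hand side is at most `Mⁿ ‖μ‖ / |Im z|`. Hence
`|F(z)|ⁿ ≤ Mⁿ · ‖μ‖ / (|Im z| |Cμ(z)|)` for every `n`, which forces `|F(z)| ≤ M` as `n → ∞`.
-/

open MeasureTheory Filter Complex

lemma le_of_forall_pow_mul_le {a M c C : ℝ} (hM : 0 ≤ M) (hc : 0 < c)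
    (h : ∀ n : ℕ, a ^ n * c ≤ M ^ n * C) : a ≤ M := by
  by_contra! hMa
  have ha : 0 < a := hM.trans_lt hMa
  have hratio : Tendsto (fun n : ℕ => (M / a) ^ n * C) atTop (nhds 0) := by
    simpa using (tendsto_pow_atTop_nhds_zero_of_lt_one (div_nonneg hM ha.le)
      ((div_lt_one ha).2 hMa)).mul_const C
  obtain ⟨n, hn⟩ := (hratio.eventually (gt_mem_nhds hc)).exists
  have hsmall : M ^ n * C < a ^ n * c := by
    calc M ^ n * C = a ^ n * ((M / a) ^ n * C) := by rw [div_pow]; field_simp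
      _ < a ^ n * c := by gcongr
  exact (h n).not_gt hsmall

section BoundedOnSupport

variable {α : Type*} [MeasurableSpace α] {ν : Measure α} {f g : α → ℂ} {B : ℝ}

lemma ae_norm_mul_le_of_ne_zero (hg : ∀ᵐ t ∂ν, f t ≠ 0 → ‖g t‖ ≤ B) :
    ∀ᵐ t ∂ν, ‖g t * f t‖ ≤ B * ‖f t‖ := by
  filter_upwards [hg] with t ht
  by_cases h0 : f t = 0
  · simp [h0]
  · rw [norm_mul]
    exact mul_le_mul_of_nonneg_right (ht h0) (norm_nonneg _)

lemma MeasureTheory.Integrable.mul_of_ae_norm_le (hf : Integrable f ν) (hgm : AEStronglyMeasurable g ν)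
    (hg : ∀ᵐ t ∂ν, f t ≠ 0 → ‖g t‖ ≤ B) : Integrable (fun t => g t * f t) ν :=
  (hf.norm.const_mul B).mono' (hgm.mul hf.1) (ae_norm_mul_le_of_ne_zero hg)

end BoundedOnSupport

noncomputable def cauchyTransform (ν : Measure ℝ) (f : ℝ → ℂ) (z : ℂ) : ℂ :=
  ∫ t, f t / ((t : ℂ) - z) ∂ν

section CauchyTransform

variable {ν : Measure ℝ} {f : ℝ → ℂ} {z : ℂ}

lemma ofReal_sub_ne_zero (hz : z.im ≠ 0) (t : ℝ) : (t : ℂ) - z ≠ 0 := by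
  intro h
  apply hz
  simpa using (congrArg Complex.im h).symm

lemma norm_div_ofReal_sub_le (hz : z.im ≠ 0) (w : ℂ) (t : ℝ) :
    ‖w / ((t : ℂ) - z)‖ ≤ ‖w‖ / |z.im| := by
  rw [norm_div]
  refine div_le_div_of_nonneg_left (norm_nonneg w) (abs_pos.2 hz) ?_
  simpa using Complex.abs_im_le_norm ((t : ℂ) - z)

lemma integrable_div_ofReal_sub (hf : Integrable f ν) (hz : z.im ≠ 0) :
    Integrable (fun t => f t / ((t : ℂ) - z)) ν := by
  have hcont : Continuous fun t : ℝ => (t : ℂ) - z := by fun_prop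
  refine (hf.norm.div_const |z.im|).mono' ?_ (ae_of_all _ fun t => norm_div_ofReal_sub_le hz (f t) t)
  simp_rw [div_eq_mul_inv]
  exact hf.1.mul (hcont.inv₀ (ofReal_sub_ne_zero hz)).aestronglyMeasurable

lemma norm_cauchyTransform_le (hf : Integrable f ν) (hz : z.im ≠ 0) :
    ‖cauchyTransform ν f z‖ ≤ (∫ t, ‖f t‖ ∂ν) / |z.im| :=
  calc ‖cauchyTransform ν f z‖ ≤ ∫ t, ‖f t‖ / |z.im| ∂ν :=
        norm_integral_le_of_norm_le (hf.norm.div_const _)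
          (ae_of_all _ fun t => norm_div_ofReal_sub_le hz (f t) t)
    _ = (∫ t, ‖f t‖ ∂ν) / |z.im| := integral_div _ _

lemma mul_cauchyTransform_eq {g : ℝ → ℂ} {w : ℂ} (hf : Integrable f ν)
    (hgf : Integrable (fun t => g t * f t) ν) (hz : z.im ≠ 0)
    (hvanish : ∫ t, (g t - w) / ((t : ℂ) - z) * f t ∂ν = 0) :
    w * cauchyTransform ν f z = cauchyTransform ν (fun t => g t * f t) z := by
  have hsplit : (fun t : ℝ => (g t - w) / ((t : ℂ) - z) * f t) =
      fun t => g t * f t / ((t : ℂ) - z) - w * (f t / ((t : ℂ) - z)) := by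
    funext t
    ring
  rw [hsplit, integral_sub (integrable_div_ofReal_sub hgf hz)
    ((integrable_div_ofReal_sub hf hz).const_mul w), integral_const_mul, sub_eq_zero] at hvanish
  exact hvanish.symm

end CauchyTransform

theorem stmt_15_general (ν : Measure ℝ) (h : ℝ → ℂ)
    (hint : Integrable h ν)
    (F : ℂ → ℂ) (hF : Differentiable ℂ F)
    (hker : ∀ n : ℕ, ∀ z : ℂ,
      ∫ t, ((F t) ^ n - (F z) ^ n) / ((t : ℂ) - z) * h t ∂ν = 0)
    (M : ℝ) (hM : ∀ᵐ t ∂ν, h t ≠ 0 → ‖F (t : ℂ)‖ ≤ M) :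
    ∀ z : ℂ, z.im ≠ 0 → (∫ t, h t / ((t : ℂ) - z) ∂ν) ≠ 0 → ‖F z‖ ≤ M := by
  intro z hz hc
  have hM0 : 0 ≤ M := by
    by_contra! hneg
    refine hc (integral_eq_zero_of_ae ?_)
    filter_upwards [hM] with t ht
    by_cases h0 : h t = 0
    · simp [h0]
    · exact absurd ((norm_nonneg _).trans (ht h0)) hneg.not_ge
  have hpow_bound (n : ℕ) : ∀ᵐ t ∂ν, h t ≠ 0 → ‖F t ^ n‖ ≤ M ^ n :=
    hM.mono fun t ht h0 => by
      rw [norm_pow]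
      exact pow_le_pow_left₀ (norm_nonneg _) (ht h0) n
  refine le_of_forall_pow_mul_le (C := (∫ t, ‖h t‖ ∂ν) / |z.im|) hM0 (norm_pos_iff.2 hc)
    fun n => ?_
  have hint_n : Integrable (fun t : ℝ => F t ^ n * h t) ν := hint.mul_of_ae_norm_le
    ((hF.continuous.comp continuous_ofReal).pow n).aestronglyMeasurable (hpow_bound n)
  calc ‖F z‖ ^ n * ‖cauchyTransform ν h z‖
      = ‖cauchyTransform ν (fun t : ℝ => F t ^ n * h t) z‖ := by
        rw [← mul_cauchyTransform_eq hint hint_n hz (hker n z), norm_mul, norm_pow]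
    _ ≤ (∫ t, ‖F t ^ n * h t‖ ∂ν) / |z.im| := norm_cauchyTransform_le hint_n hz
    _ ≤ (∫ t, M ^ n * ‖h t‖ ∂ν) / |z.im| :=
        div_le_div_of_nonneg_right (integral_mono_ae hint_n.norm (hint.norm.const_mul _)
          (ae_norm_mul_le_of_ne_zero (hpow_bound n))) (abs_nonneg _)
    _ = M ^ n * ((∫ t, ‖h t‖ ∂ν) / |z.im|) := by
        rw [integral_const_mul, mul_div_assoc]

/-- If `μ = h dν` is a nonzero complex measure of finite total variation,
`F` is entire of exponential type zero with `∫ (Fⁿ(t) - Fⁿ(z))/(t-z) dμ(t) = 0` for all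
`z ∈ ℂ` and all `n`, and `|F| ≤ M` on the support of `μ`, then `|F(z)| ≤ M` for every `z`
with `Im z ≠ 0` at which `∫ dμ(t)/(t-z) ≠ 0`. -/
theorem stmt_15 (ν : Measure ℝ) [IsFiniteMeasure ν] (h : ℝ → ℂ)
    (hint : Integrable h ν) (hne : ¬ (∀ᵐ t ∂ν, h t = 0))
    (F : ℂ → ℂ) (hF : Differentiable ℂ F) (htype : ExpTypeZero F)
    (hker : ∀ n : ℕ, ∀ z : ℂ,
      ∫ t, ((F t) ^ n - (F z) ^ n) / ((t : ℂ) - z) * h t ∂ν = 0)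
    (M : ℝ) (hM : ∀ᵐ t ∂ν, h t ≠ 0 → ‖F (t : ℂ)‖ ≤ M) :
    ∀ z : ℂ, z.im ≠ 0 → (∫ t, h t / ((t : ℂ) - z) ∂ν) ≠ 0 → ‖F z‖ ≤ M :=
  stmt_15_general ν h hint F hF hker M hM
end

section
/- Let Θ be an inner function on ℂ₊. Then 1 - Θ(iy) does not tend to 0 exponentially fast as y → +∞: for every c > 0, e^{cy}·|1 - Θ(iy)| → ∞ as y → +∞ (unless Θ ≡ 1). -/
open MeasureTheory Filter Complex Set

/-- `Θ` is an inner function on the upper half-plane: analytic, bounded by `1`, with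
vertical boundary values of modulus `1` a.e. on ℝ. -/
def IsInner (Θ : ℂ → ℂ) : Prop :=
  DifferentiableOn ℂ Θ {z : ℂ | 0 < z.im} ∧
  (∀ z : ℂ, 0 < z.im → ‖Θ z‖ ≤ 1) ∧
  (∀ᵐ x : ℝ, Tendsto (fun y : ℝ => ‖Θ (x + y * Complex.I)‖)
    (nhdsWithin 0 (Ioi 0)) (nhds 1))

/-!
The Cayley transform `w ↦ i (1 + w) / (1 - w)` sends `r = (y - 1) / (y + 1)` to `i y`, so the
Schwarz lemma applied to `Θ` composed with the Cayley transform and the disc automorphism moving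
`Θ(i)` to `0` gives the Schwarz–Pick bound `|Θ(iy) - Θ(i)| ≤ r |1 - conj Θ(i) Θ(iy)|`. Two
triangle inequalities turn this into `|1 - Θ(i)| ≤ y |1 - Θ(iy)|` for `y ≥ 1`; by the maximum
principle the same holds when `Θ` is a unimodular constant, and `Θ(i) ≠ 1` unless `Θ ≡ 1`. Hence
`|1 - Θ(iy)|` decays at most like `1 / y`, which `e^{cy}` beats.
-/

open Metric ComplexConjugate

local notation "ℂ₊" => Set.ofPred fun z : ℂ => 0 < im z

theorem isPreconnected_upperHalfPlane : IsPreconnected ℂ₊ :=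
  (convex_halfSpace_im_gt 0).isPreconnected

theorem isOpen_upperHalfPlane : IsOpen ℂ₊ :=
  isOpen_lt continuous_const continuous_im

noncomputable def diskMobius (b v : ℂ) : ℂ := (v - b) / (1 - conj b * v)

theorem normSq_one_sub_conj_mul_sub_normSq_sub (b v : ℂ) :
    normSq (1 - conj b * v) - normSq (v - b) = (1 - normSq b) * (1 - normSq v) := by
  simp only [normSq_apply, mul_re, mul_im, sub_re, sub_im, conj_re, conj_im, one_re, one_im]
  ring

theorem one_sub_conj_mul_ne_zero {b v : ℂ} (hb : ‖b‖ < 1) (hv : ‖v‖ ≤ 1) :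
    1 - conj b * v ≠ 0 := by
  have : ‖conj b * v‖ < 1 := by
    rw [norm_mul, RCLike.norm_conj]
    nlinarith [norm_nonneg b, norm_nonneg v]
  intro h
  rw [← sub_eq_zero.1 h, norm_one] at this
  exact this.false

theorem norm_diskMobius_lt_one {b v : ℂ} (hb : ‖b‖ < 1) (hv : ‖v‖ < 1) :
    ‖diskMobius b v‖ < 1 := by
  rw [diskMobius, norm_div, div_lt_one (norm_pos_iff.2 (one_sub_conj_mul_ne_zero hb hv.le)),
    ← sq_lt_sq₀ (norm_nonneg _) (norm_nonneg _), ← normSq_eq_norm_sq, ← normSq_eq_norm_sq,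
    ← sub_pos, normSq_one_sub_conj_mul_sub_normSq_sub, normSq_eq_norm_sq, normSq_eq_norm_sq]
  have hb2 : ‖b‖ ^ 2 < 1 := by nlinarith [norm_nonneg b]
  have hv2 : ‖v‖ ^ 2 < 1 := by nlinarith [norm_nonneg v]
  nlinarith

noncomputable def cayley (w : ℂ) : ℂ := I * (1 + w) / (1 - w)

theorem cayley_im (w : ℂ) : (cayley w).im = (1 - normSq w) / normSq (1 - w) := by
  rw [cayley, div_im, div_sub_div_same]
  congr 1
  simp only [mul_re, mul_im, I_re, I_im, add_re, add_im, sub_re, sub_im, one_re, one_im,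
    normSq_apply]
  ring

theorem cayley_im_pos {w : ℂ} (hw : w ∈ ball (0 : ℂ) 1) : 0 < (cayley w).im := by
  rw [mem_ball_zero_iff] at hw
  have hw1 : w ≠ 1 := by rintro rfl; simp at hw
  rw [cayley_im, normSq_eq_norm_sq]
  exact div_pos (by nlinarith [norm_nonneg w]) (normSq_pos.2 (sub_ne_zero.2 hw1.symm))

theorem cayley_zero : cayley 0 = I := by simp [cayley]

theorem cayley_ofReal {y : ℝ} (hy : y + 1 ≠ 0) : cayley ((y - 1) / (y + 1) : ℝ) = y * I := by
  have hy' : (y : ℂ) + 1 ≠ 0 := by exact_mod_cast hy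
  rw [cayley]
  push_cast
  field_simp
  ring

theorem differentiableOn_cayley : DifferentiableOn ℂ cayley (ball 0 1) :=
  (by fun_prop : Differentiable ℂ fun w : ℂ => I * (1 + w)).differentiableOn.div
    (by fun_prop : Differentiable ℂ fun w : ℂ => 1 - w).differentiableOn
    fun w hw h => by simp [← sub_eq_zero.1 h] at hw

/-- Schwarz–Pick: `(y - 1) / (y + 1)` is the pseudo-hyperbolic distance between `i` and `i y`. -/
theorem norm_diskMobius_le {f : ℂ → ℂ} (hd : DifferentiableOn ℂ f ℂ₊)
    (hf : MapsTo f ℂ₊ (ball 0 1)) {y : ℝ} (hy : 1 ≤ y) :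
    ‖diskMobius (f I) (f (y * I))‖ ≤ (y - 1) / (y + 1) := by
  have hb : ‖f I‖ < 1 := mem_ball_zero_iff.1 (hf (by simp))
  have hC : MapsTo cayley (ball 0 1) ℂ₊ := fun w hw => cayley_im_pos hw
  have hfC : DifferentiableOn ℂ (f ∘ cayley) (ball 0 1) := hd.comp differentiableOn_cayley hC
  have hh : DifferentiableOn ℂ (fun w => diskMobius (f I) (f (cayley w))) (ball 0 1) :=
    (hfC.sub_const _).div ((differentiableOn_const _).sub ((differentiableOn_const _).mul hfC))
      fun w hw => one_sub_conj_mul_ne_zero hb (mem_ball_zero_iff.1 (hf (hC hw))).le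
  have hmaps : MapsTo (fun w => diskMobius (f I) (f (cayley w))) (ball 0 1) (closedBall 0 1) :=
    fun w hw => mem_closedBall_zero_iff.2
      (norm_diskMobius_lt_one hb (mem_ball_zero_iff.1 (hf (hC hw)))).le
  have hr0 : 0 ≤ (y - 1) / (y + 1) := div_nonneg (by linarith) (by linarith)
  have hr1 : ‖(((y - 1) / (y + 1) : ℝ) : ℂ)‖ < 1 := by
    rw [norm_real, Real.norm_of_nonneg hr0, div_lt_one (by linarith)]
    linarith
  have := Complex.norm_le_norm_of_mapsTo_ball hh hmaps (by simp [cayley_zero, diskMobius]) hr1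
  rwa [cayley_ofReal (by linarith), norm_real, Real.norm_of_nonneg hr0] at this

theorem one_sub_mul_norm_one_sub_le {b v : ℂ} {r : ℝ} (hv : ‖v‖ ≤ 1) (hr : 0 ≤ r)
    (h : ‖v - b‖ ≤ r * ‖1 - conj b * v‖) : (1 - r) * ‖1 - b‖ ≤ (1 + r) * ‖1 - v‖ := by
  have hden : ‖1 - conj b * v‖ ≤ ‖1 - v‖ + ‖1 - b‖ := calc
    ‖1 - conj b * v‖ = ‖(1 - v) + v * conj (1 - b)‖ := by simp only [map_sub, map_one]; ring_nf
    _ ≤ ‖1 - v‖ + ‖v‖ * ‖1 - b‖ := by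
      rw [← RCLike.norm_conj (1 - b), ← norm_mul]
      exact norm_add_le _ _
    _ ≤ ‖1 - v‖ + ‖1 - b‖ := by gcongr; exact mul_le_of_le_one_left (norm_nonneg _) hv
  have htri : ‖1 - b‖ ≤ ‖1 - v‖ + ‖v - b‖ := by
    simpa using norm_add_le (1 - v) (v - b)
  linarith [mul_le_mul_of_nonneg_left hden hr]

theorem norm_one_sub_le_mul_norm_one_sub_of_mapsTo_ball {f : ℂ → ℂ}
    (hd : DifferentiableOn ℂ f ℂ₊) (hf : MapsTo f ℂ₊ (ball 0 1)) {y : ℝ} (hy : 1 ≤ y) :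
    ‖1 - f I‖ ≤ y * ‖1 - f (y * I)‖ := by
  have hb : ‖f I‖ < 1 := mem_ball_zero_iff.1 (hf (by simp))
  have hv : ‖f (y * I)‖ < 1 := mem_ball_zero_iff.1 (hf (by simp; linarith))
  have hden := one_sub_conj_mul_ne_zero hb hv.le
  have hpick := norm_diskMobius_le hd hf hy
  rw [diskMobius, norm_div, div_le_iff₀ (norm_pos_iff.2 hden)] at hpick
  have key := one_sub_mul_norm_one_sub_le hv.le (div_nonneg (by linarith) (by linarith)) hpick
  have hy1 : 0 < y + 1 := by linarith
  rw [one_sub_div hy1.ne', one_add_div hy1.ne'] at key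
  field_simp at key
  linarith

theorem eqOn_of_norm_eq_one {f : ℂ → ℂ} {U : Set ℂ} (hU : IsPreconnected U) (ho : IsOpen U)
    (hd : DifferentiableOn ℂ f U) (hf : ∀ z ∈ U, ‖f z‖ ≤ 1) {z₀ : ℂ} (hz₀ : z₀ ∈ U)
    (h : ‖f z₀‖ = 1) : EqOn f (Function.const ℂ (f z₀)) U :=
  eqOn_of_isPreconnected_of_isMaxOn_norm hU ho hd hz₀ fun z hz => by simpa [h] using hf z hz

theorem norm_one_sub_le_mul_norm_one_sub {f : ℂ → ℂ} (hd : DifferentiableOn ℂ f ℂ₊)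
    (hf : ∀ z ∈ ℂ₊, ‖f z‖ ≤ 1) {y : ℝ} (hy : 1 ≤ y) : ‖1 - f I‖ ≤ y * ‖1 - f (y * I)‖ := by
  by_cases hlt : ∀ z ∈ ℂ₊, ‖f z‖ < 1
  · exact norm_one_sub_le_mul_norm_one_sub_of_mapsTo_ball hd
      (fun z hz => mem_ball_zero_iff.2 (hlt z hz)) hy
  push Not at hlt
  obtain ⟨z₀, hz₀, h⟩ := hlt
  have hconst := eqOn_of_norm_eq_one isPreconnected_upperHalfPlane isOpen_upperHalfPlane hd hf
    hz₀ (le_antisymm (hf z₀ hz₀) h)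
  rw [hconst (by simp : I ∈ ℂ₊), hconst (by simp; linarith : (y * I : ℂ) ∈ ℂ₊)]
  exact le_mul_of_one_le_left (norm_nonneg _) hy

theorem apply_I_ne_one {f : ℂ → ℂ} (hd : DifferentiableOn ℂ f ℂ₊) (hf : ∀ z ∈ ℂ₊, ‖f z‖ ≤ 1)
    (hne : ∃ z ∈ ℂ₊, f z ≠ 1) : f I ≠ 1 := by
  intro hI
  obtain ⟨z, hz, hfz⟩ := hne
  have hconst := eqOn_of_norm_eq_one isPreconnected_upperHalfPlane isOpen_upperHalfPlane hd hf
    (show I ∈ ℂ₊ by simp) (by simp [hI])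
  exact hfz ((hconst hz).trans hI)

/-- For an inner function `Θ` on `ℂ₊` with `Θ ≢ 1`, the quantity `1 - Θ(iy)`
does not tend to `0` exponentially fast: for every `c > 0`,
`e^{cy}·|1 - Θ(iy)| → ∞` as `y → +∞`. -/
theorem stmt_18 (Θ : ℂ → ℂ) (hΘ : IsInner Θ)
    (hne1 : ∃ z : ℂ, 0 < z.im ∧ Θ z ≠ 1) :
    ∀ c : ℝ, 0 < c →
      Tendsto (fun y : ℝ => Real.exp (c * y) * ‖1 - Θ (y * Complex.I)‖) atTop atTop := by
  intro c hc
  obtain ⟨hd, hb, -⟩ := hΘ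
  have hK : 0 < ‖1 - Θ I‖ :=
    norm_pos_iff.2 (sub_ne_zero.2 (apply_I_ne_one hd hb hne1).symm)
  have hlow : Tendsto (fun y : ℝ => ‖1 - Θ I‖ * (Real.exp (c * y) / y ^ (1 : ℝ))) atTop atTop :=
    (tendsto_exp_mul_div_rpow_atTop 1 c hc).const_mul_atTop hK
  refine tendsto_atTop_mono' atTop ?_ hlow
  filter_upwards [eventually_ge_atTop 1] with y hy
  rw [Real.rpow_one, mul_div_assoc', div_le_iff₀ (by linarith)]
  calc ‖1 - Θ I‖ * Real.exp (c * y)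
      ≤ y * ‖1 - Θ (y * I)‖ * Real.exp (c * y) := by
        gcongr; exact norm_one_sub_le_mul_norm_one_sub hd hb hy
    _ = Real.exp (c * y) * ‖1 - Θ (y * I)‖ * y := by ring
end
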